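/- arXiv:2006.00547 — 2 statements merged into one kernel-verified Lean document; each statement's English description precedes it below -/
import Mathlib

section
/- Let v : ℝ × ℝ² → ℝ² be a smooth velocity field such that for every time t the function x ↦ v(t,x) has support in a fixed compact set. Let ρ, h, ρ_w, C_w1, ζ_min, c_p > 0 and f_c, P ∈ ℝ be constants, let ζ : ℝ × ℝ² → ℝ be continuously differentiable with ζ(t,x) ≥ ζ_min for all (t,x), and let R : ℝ × ℝ² → ℝ² be continuous with x ↦ R(t,x) square integrable for each t. Denote by Dv(t,x) the spatial Jacobian matrix, by E = (Dv + Dvᵀ)/2 the strain rate, and set σ = (ζ/2)E + (3ζ/4)tr(E)I − (P/2)I. Assume v satisfies pointwise the viscous-plastic momentum equation ρh ∂ₜv = div σ + R − ρ_w C_w1 v − ρ h f_c v⊥, where (div σ)ᵢ = Σⱼ ∂ⱼσᵢⱼ and v⊥ = (−v₂, v₁), and assume the Poincaré inequality ∫_{ℝ²} ‖v(t,x)‖² dx ≤ c_p ∫_{ℝ²} ‖Dv(t,x)‖_F² dx holds for every t. Then for every T ≥ 0: ρh ∫_{ℝ²} ‖v(T,x)‖² dx + ∫₀ᵀ ( 2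 ρ_w C_w1 ∫_{ℝ²} ‖v(t,x)‖² dx + (ζ_min/4) ∫_{ℝ²} ‖Dv(t,x)‖_F² dx ) dt ≤ ρh ∫_{ℝ²} ‖v(0,x)‖² dx + (4 c_p/ζ_min) ∫₀ᵀ ∫_{ℝ²} ‖R(t,x)‖² dx dt. -/
open MeasureTheory Matrix Function

noncomputable section

/-- The plane, as a Euclidean space. -/
abbrev E2 := EuclideanSpace ℝ (Fin 2)

/-- The spatial Jacobian matrix of a vector field `u : ℝ² → ℝ²` at a point `x`. -/
def jac (u : E2 → E2) (x : E2) : Matrix (Fin 2) (Fin 2) ℝ :=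
  fun i j => fderiv ℝ (fun y => u y i) x (EuclideanSpace.single j 1)

/-- The Frobenius inner product of `2 × 2` real matrices. -/
def frobInner (A B : Matrix (Fin 2) (Fin 2) ℝ) : ℝ := (Aᵀ * B).trace

/-- The squared Frobenius norm of a `2 × 2` real matrix. -/
def frobSq (A : Matrix (Fin 2) (Fin 2) ℝ) : ℝ := frobInner A A

/-- The strain rate tensor: the symmetric part of the Jacobian. -/
def strain (u : E2 → E2) (x : E2) : Matrix (Fin 2) (Fin 2) ℝ :=
  (2 : ℝ)⁻¹ • (jac u x + (jac u x)ᵀ)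

/-! ### Auxiliary lemmas -/

lemma jac_apply (u : E2 → E2) (x : E2) (i j : Fin 2) :
    jac u x i j = fderiv ℝ (fun y => u y i) x (EuclideanSpace.single j 1) := rfl

lemma frobInner_expand (A B : Matrix (Fin 2) (Fin 2) ℝ) :
    frobInner A B = A 0 0 * B 0 0 + A 0 1 * B 0 1 + A 1 0 * B 1 0 + A 1 1 * B 1 1 := by
  simp [frobInner, Matrix.trace, Matrix.diag, Matrix.mul_apply, Fin.sum_univ_two,
    Matrix.transpose_apply]
  ring

lemma frobSq_expand (A : Matrix (Fin 2) (Fin 2) ℝ) :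
    frobSq A = A 0 0 ^ 2 + A 0 1 ^ 2 + A 1 0 ^ 2 + A 1 1 ^ 2 := by
  rw [frobSq, frobInner_expand]; ring

lemma norm_sq_eq (y : E2) : ‖y‖ ^ 2 = ∑ i : Fin 2, (y i) ^ 2 := by
  rw [EuclideanSpace.norm_eq, Real.sq_sqrt (by positivity)]
  simp [Real.norm_eq_abs, sq_abs]

lemma aux_hcs {K : Set E2} (hK : IsCompact K) {f : E2 → ℝ}
    (h : support f ⊆ K) : HasCompactSupport f :=
  HasCompactSupport.intro hK (fun x hx => by
    by_contra h0
    exact hx (h (by simpa [Function.mem_support] using h0)))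

lemma aux_integrable {K : Set E2} (hK : IsCompact K) {f : E2 → ℝ}
    (hf : Continuous f) (h : support f ⊆ K) : Integrable f :=
  hf.integrable_of_hasCompactSupport (aux_hcs hK h)

lemma aux_bound {K : Set E2} (hK : IsCompact K) {f : ℝ → E2 → ℝ}
    (hf : Continuous (uncurry f)) (h : ∀ t, support (f t) ⊆ K) (t₀ : ℝ) :
    ∃ C : ℝ, (Integrable (K.indicator fun _ => C)) ∧
      ∀ t ∈ Set.Icc (t₀-1) (t₀+1), ∀ x, ‖f t x‖ ≤ K.indicator (fun _ => C) x := by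
  obtain ⟨C, hC⟩ := (isCompact_Icc.prod hK).exists_bound_of_continuousOn
    (hf.continuousOn (s := (Set.Icc (t₀-1) (t₀+1)) ×ˢ K))
  refine ⟨max C 0, ?_, ?_⟩
  · rw [integrable_indicator_iff hK.measurableSet]
    exact integrableOn_const hK.measure_lt_top.ne
  · intro t ht x
    by_cases hx : x ∈ K
    · rw [Set.indicator_of_mem hx]
      exact le_trans (hC (t, x) (Set.mk_mem_prod ht hx)) (le_max_left _ _)
    · have : f t x = 0 := by
        by_contra h0
        exact hx (h t (by simpa [Function.mem_support] using h0))
      simp [Set.indicator_of_notMem hx, this]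

lemma aux_cont_param {K : Set E2} (hK : IsCompact K) {f : ℝ → E2 → ℝ}
    (hf : Continuous (uncurry f)) (h : ∀ t, support (f t) ⊆ K) :
    Continuous fun t => ∫ x, f t x := by
  rw [continuous_iff_continuousAt]
  intro t₀
  obtain ⟨C, hCi, hCb⟩ := aux_bound hK hf h t₀
  apply continuousAt_of_dominated (bound := K.indicator fun _ => C)
  · exact Filter.Eventually.of_forall fun t =>
      (hf.comp (Continuous.prodMk_right t)).aestronglyMeasurable
  · filter_upwards [Icc_mem_nhds (by linarith : t₀ - 1 < t₀) (by linarith : t₀ < t₀ + 1)]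
      with t ht
    exact Filter.Eventually.of_forall fun x => hCb t ht x
  · exact hCi
  · exact Filter.Eventually.of_forall fun x =>
      (hf.comp (continuous_id.prodMk continuous_const)).continuousAt

lemma aux_hasDeriv_param {K : Set E2} (hK : IsCompact K) {f g : ℝ → E2 → ℝ}
    (hf : Continuous (uncurry f)) (hg : Continuous (uncurry g))
    (hsf : ∀ t, support (f t) ⊆ K) (hsg : ∀ t, support (g t) ⊆ K)
    (hder : ∀ t x, HasDerivAt (fun s => f s x) (g t x) t) (t₀ : ℝ) :
    HasDerivAt (fun t => ∫ x, f t x) (∫ x, g t₀ x) t₀ := by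
  obtain ⟨C, hCi, hCb⟩ := aux_bound hK hg hsg t₀
  refine (hasDerivAt_integral_of_dominated_loc_of_deriv_le (Metric.ball_mem_nhds t₀ one_pos)
    (Filter.Eventually.of_forall fun t =>
      (hf.comp (Continuous.prodMk_right t)).aestronglyMeasurable)
    (aux_integrable hK (hf.comp (Continuous.prodMk_right t₀)) (hsf t₀))
    ((hg.comp (Continuous.prodMk_right t₀)).aestronglyMeasurable)
    (Filter.Eventually.of_forall fun x => fun t ht => ?_) hCi
    (Filter.Eventually.of_forall fun x => fun t _ => hder t x)).2
  have : t ∈ Set.Icc (t₀ - 1) (t₀ + 1) := by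
    have := Metric.mem_ball.1 ht
    rw [Real.dist_eq] at this
    constructor <;> [linarith [abs_le.1 this.le |>.1]; linarith [abs_le.1 this.le |>.2]]
  exact hCb t this x

section Vfield

variable {v : ℝ → E2 → E2}

/-- Scalar component of the space-time velocity field. -/
def pw (v : ℝ → E2 → E2) (i : Fin 2) : ℝ × E2 → ℝ := fun p => v p.1 p.2 i

lemma pw_cd (hv : ContDiff ℝ (⊤ : ℕ∞) (uncurry v)) (i : Fin 2) : ContDiff ℝ (⊤ : ℕ∞) (pw v i) :=
  contDiff_euclidean.1 hv i

/-- Time derivative of a component of the velocity field. -/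
def dtv (v : ℝ → E2 → E2) (i : Fin 2) : ℝ × E2 → ℝ :=
  fun p => fderiv ℝ (pw v i) p (1, 0)

lemma dtv_cont (hv : ContDiff ℝ (⊤ : ℕ∞) (uncurry v)) (i : Fin 2) : Continuous (dtv v i) :=
  ((pw_cd hv i).continuous_fderiv (by simp)).clm_apply continuous_const

lemma hasDerivAt_dtv (hv : ContDiff ℝ (⊤ : ℕ∞) (uncurry v)) (i : Fin 2) (t : ℝ) (x : E2) :
    HasDerivAt (fun s => v s x i) (dtv v i (t, x)) t := by
  have h1 : HasFDerivAt (pw v i) (fderiv ℝ (pw v i) (t, x)) (t, x) :=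
    (((pw_cd hv i).differentiable (by simp)) _).hasFDerivAt
  have h2 : HasDerivAt (fun s : ℝ => ((s : ℝ), x)) ((1 : ℝ), (0 : E2)) t :=
    (hasDerivAt_id t).prodMk (hasDerivAt_const t x)
  exact h1.comp_hasDerivAt t h2

lemma jac_eq (hv : ContDiff ℝ (⊤ : ℕ∞) (uncurry v)) (t : ℝ) (x : E2) (i j : Fin 2) :
    jac (v t) x i j = fderiv ℝ (pw v i) (t, x) (0, EuclideanSpace.single j 1) := by
  have h1 : HasFDerivAt (pw v i) (fderiv ℝ (pw v i) (t, x)) (t, x) :=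
    (((pw_cd hv i).differentiable (by simp)) _).hasFDerivAt
  have h2 : HasFDerivAt (fun y : E2 => ((t : ℝ), y))
      ((0 : E2 →L[ℝ] ℝ).prod (ContinuousLinearMap.id ℝ E2)) x :=
    (hasFDerivAt_const t x).prodMk (hasFDerivAt_id x)
  have h3 := h1.comp x h2
  have heq : fderiv ℝ (fun y => v t y i) x =
      (fderiv ℝ (pw v i) (t, x)).comp ((0 : E2 →L[ℝ] ℝ).prod (ContinuousLinearMap.id ℝ E2)) :=
    h3.fderiv
  show fderiv ℝ (fun y => v t y i) x (EuclideanSpace.single j 1) = _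
  rw [heq]
  simp

lemma jac_cont (hv : ContDiff ℝ (⊤ : ℕ∞) (uncurry v)) (i j : Fin 2) :
    Continuous (fun p : ℝ × E2 => jac (v p.1) p.2 i j) := by
  have : (fun p : ℝ × E2 => jac (v p.1) p.2 i j) =
      fun p => fderiv ℝ (pw v i) p (0, EuclideanSpace.single j 1) :=
    funext fun p => jac_eq hv p.1 p.2 i j
  rw [this]
  exact ((pw_cd hv i).continuous_fderiv (by simp)).clm_apply continuous_const

lemma vt_cd (hv : ContDiff ℝ (⊤ : ℕ∞) (uncurry v)) (t : ℝ) (i : Fin 2) :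
    ContDiff ℝ (⊤ : ℕ∞) (fun x => v t x i) :=
  (pw_cd hv i).comp (contDiff_const.prodMk contDiff_id)

lemma jac_cd (hv : ContDiff ℝ (⊤ : ℕ∞) (uncurry v)) (t : ℝ) (i j : Fin 2) :
    ContDiff ℝ (⊤ : ℕ∞) (fun x => jac (v t) x i j) :=
  ((vt_cd hv t i).fderiv_right (by simp)).clm_apply contDiff_const

variable {K : Set E2}

lemma v_zeroE (hsupp : ∀ t, support (v t) ⊆ K) {x : E2} (hx : x ∉ K) (t : ℝ) :
    v t x = 0 := by
  by_contra h0
  exact hx (hsupp t (by simpa [Function.mem_support] using h0))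

lemma v_zero (hsupp : ∀ t, support (v t) ⊆ K) {x : E2} (hx : x ∉ K) (t : ℝ) (i : Fin 2) :
    v t x i = 0 := by
  rw [v_zeroE hsupp hx t]; rfl

lemma jac_zero (hK : IsCompact K) (hsupp : ∀ t, support (v t) ⊆ K)
    {x : E2} (hx : x ∉ K) (t : ℝ) : jac (v t) x = 0 := by
  ext i j
  have hev : (fun y => v t y i) =ᶠ[nhds x] fun _ => (0 : ℝ) := by
    filter_upwards [hK.isClosed.isOpen_compl.mem_nhds hx] with y hy
    exact v_zero hsupp hy t i
  show fderiv ℝ (fun y => v t y i) x (EuclideanSpace.single j 1) = 0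
  rw [hev.fderiv_eq, fderiv_fun_const]
  rfl

end Vfield

lemma fderiv_zero_outside {K : Set E2} (hK : IsCompact K) {f : E2 → ℝ}
    (hs : support f ⊆ K) {x : E2} (hx : x ∉ K) (w : E2) : fderiv ℝ f x w = 0 := by
  have hev : f =ᶠ[nhds x] fun _ => (0 : ℝ) := by
    filter_upwards [hK.isClosed.isOpen_compl.mem_nhds hx] with y hy
    by_contra h0
    exact hy (hs (by simpa [Function.mem_support] using h0))
  rw [hev.fderiv_eq, fderiv_fun_const]
  rfl

lemma ibp {K : Set E2} (hK : IsCompact K) {f g : E2 → ℝ} (w : E2)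
    (hf : ContDiff ℝ 1 f) (hg : ContDiff ℝ 1 g) (hs : support f ⊆ K) :
    ∫ x, f x * fderiv ℝ g x w = - ∫ x, fderiv ℝ f x w * g x := by
  have hfc := hf.continuous
  have hgc := hg.continuous
  have hdf : Continuous fun x => fderiv ℝ f x w :=
    (hf.continuous_fderiv one_ne_zero).clm_apply continuous_const
  have hdg : Continuous fun x => fderiv ℝ g x w :=
    (hg.continuous_fderiv one_ne_zero).clm_apply continuous_const
  have hsdf : support (fun x => fderiv ℝ f x w) ⊆ K := fun x hx => by
    by_contra hxK
    exact hx (fderiv_zero_outside hK hs hxK w)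
  apply integral_mul_fderiv_eq_neg_fderiv_mul_of_integrable
  · exact aux_integrable hK (hdf.mul hgc) ((support_mul_subset_left _ _).trans hsdf)
  · exact aux_integrable hK (hfc.mul hdg) ((support_mul_subset_left _ _).trans hs)
  · exact aux_integrable hK (hfc.mul hgc) ((support_mul_subset_left _ _).trans hs)
  · exact fun x _ => hf.differentiable one_ne_zero x
  · exact fun x _ => hg.differentiable one_ne_zero x

lemma schwarz {f : E2 → ℝ} (hf : ContDiff ℝ (⊤ : ℕ∞) f) (u w x : E2) :
    fderiv ℝ (fun y => fderiv ℝ f y u) x w = fderiv ℝ (fun y => fderiv ℝ f y w) x u := by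
  have hsym : IsSymmSndFDerivAt ℝ f x := hf.contDiffAt.isSymmSndFDerivAt (by rw [minSmoothness_of_isRCLikeNormedField]; exact WithTop.coe_le_coe.2 le_top)
  have hdf : DifferentiableAt ℝ (fderiv ℝ f) x :=
    ((hf.fderiv_right (m := 1) (WithTop.coe_le_coe.2 le_top)).differentiable one_ne_zero) x
  have h1 : ∀ z : E2, fderiv ℝ (fun y => fderiv ℝ f y z) x =
      (fderiv ℝ (fderiv ℝ f) x).flip z := by
    intro z
    have := fderiv_clm_apply (c := fderiv ℝ f) (u := fun _ => z) hdf
      (differentiableAt_const z)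
    simpa [fderiv_fun_const] using this
  rw [h1 u, h1 w, ContinuousLinearMap.flip_apply, ContinuousLinearMap.flip_apply]
  exact hsym.eq w u

lemma I1' {K : Set E2} (hK : IsCompact K) {f : E2 → ℝ} (hf : ContDiff ℝ (⊤ : ℕ∞) f)
    (hs : support f ⊆ K) (w : E2) : ∫ x, fderiv ℝ f x w = 0 := by
  have h := ibp hK w (hf.of_le (by simp)) (contDiff_const (c := (1:ℝ))) hs
  simp only [fderiv_fun_const, Pi.zero_apply, ContinuousLinearMap.zero_apply, mul_zero,
    integral_zero, mul_one] at h
  linarith [h]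

lemma dcd {f : E2 → ℝ} (hf : ContDiff ℝ (⊤ : ℕ∞) f) (w : E2) :
    ContDiff ℝ (⊤ : ℕ∞) fun x => fderiv ℝ f x w :=
  (hf.fderiv_right (by simp)).clm_apply contDiff_const

lemma I2' {K : Set E2} (hK : IsCompact K) {f g : E2 → ℝ}
    (hf : ContDiff ℝ (⊤ : ℕ∞) f) (hg : ContDiff ℝ (⊤ : ℕ∞) g)
    (hsf : support f ⊆ K) (a b : E2) :
    ∫ x, fderiv ℝ f x a * fderiv ℝ g x b = ∫ x, fderiv ℝ f x b * fderiv ℝ g x a := by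
  have hsdf : ∀ w : E2, support (fun x => fderiv ℝ f x w) ⊆ K := fun w x hx => by
    by_contra hxK
    exact hx (fderiv_zero_outside hK hsf hxK w)
  have h1 := ibp hK b ((dcd hf a).of_le (by simp)) (hg.of_le (by simp)) (hsdf a)
  have h3 := ibp hK a ((dcd hf b).of_le (by simp)) (hg.of_le (by simp)) (hsdf b)
  have h2 : (fun x => fderiv ℝ (fun y => fderiv ℝ f y a) x b * g x) =
      fun x => fderiv ℝ (fun y => fderiv ℝ f y b) x a * g x :=
    funext fun x => by rw [schwarz hf a b x]
  rw [h1, h2, ← h3]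
set_option maxHeartbeats 1000000 in
/-- H¹-estimate for the viscous-plastic sea-ice momentum equation
(Theorem 1 of the paper), for classical solutions with linearized ocean drag,
constant ice strength, stress `σ = (ζ/2)E + (3ζ/4)tr(E)I − (P/2)I`, assuming a
Poincaré inequality. -/
theorem vp_H1_estimate
    (v : ℝ → E2 → E2) (R : ℝ → E2 → E2) (ζ : ℝ → E2 → ℝ)
    (ρ h ρw Cw1 ζmin cp fc P : ℝ)
    (hρ : 0 < ρ) (hh : 0 < h) (hρw : 0 < ρw) (hCw1 : 0 < Cw1)
    (hζmin : 0 < ζmin) (hcp : 0 < cp)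
    (hv : ContDiff ℝ (⊤ : ℕ∞) (uncurry v))
    (K : Set E2) (hK : IsCompact K)
    (hsupp : ∀ t, Function.support (v t) ⊆ K)
    (hζ : ContDiff ℝ 1 (uncurry ζ))
    (hζlb : ∀ t x, ζmin ≤ ζ t x)
    (hR : Continuous (uncurry R))
    (hRL2 : ∀ t, Integrable fun x => ‖R t x‖ ^ 2)
    (σ : ℝ → E2 → Matrix (Fin 2) (Fin 2) ℝ)
    (hσ : ∀ t x, σ t x =
        (ζ t x / 2) • strain (v t) x
        + (3 * ζ t x / 4 * (strain (v t) x).trace) • (1 : Matrix (Fin 2) (Fin 2) ℝ)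
        - (P / 2) • (1 : Matrix (Fin 2) (Fin 2) ℝ))
    (hmom : ∀ t x (i : Fin 2),
      ρ * h * deriv (fun s => v s x i) t =
        (∑ j : Fin 2, fderiv ℝ (fun y => σ t y i j) x (EuclideanSpace.single j 1))
        + R t x i - ρw * Cw1 * v t x i
        - ρ * h * fc * (if i = 0 then -(v t x 1) else v t x 0))
    (hPoincare : ∀ t, (∫ x, ‖v t x‖ ^ 2) ≤ cp * ∫ x, frobSq (jac (v t) x))
    (T : ℝ) (hT : 0 ≤ T) :
    ρ * h * (∫ x, ‖v T x‖ ^ 2)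
      + (∫ t in (0:ℝ)..T,
          (2 * ρw * Cw1 * (∫ x, ‖v t x‖ ^ 2)
            + ζmin / 4 * ∫ x, frobSq (jac (v t) x)))
      ≤ ρ * h * (∫ x, ‖v 0 x‖ ^ 2)
        + 4 * cp / ζmin * ∫ t in (0:ℝ)..T, ∫ x, ‖R t x‖ ^ 2 := by
  -- basic smoothness facts
  have hζt : ∀ t, ContDiff ℝ 1 (ζ t) := fun t => hζ.comp (contDiff_const.prodMk contDiff_id)
  have hσentry : ∀ t x (i j : Fin 2), σ t x i j =
      ζ t x / 2 * (2⁻¹ * (jac (v t) x i j + jac (v t) x j i))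
      + 3 * ζ t x / 4 * (jac (v t) x 0 0 + jac (v t) x 1 1) * (if i = j then (1:ℝ) else 0)
      - P / 2 * (if i = j then (1:ℝ) else 0) := by
    intro t x i j
    rw [hσ]
    simp only [strain, Matrix.trace, Matrix.diag, Fin.sum_univ_two, Matrix.sub_apply,
      Matrix.add_apply, Matrix.smul_apply, Matrix.one_apply, Matrix.transpose_apply,
      smul_eq_mul]
    ring
  have hσcd : ∀ t (i j : Fin 2), ContDiff ℝ 1 (fun x => σ t x i j) := by
    intro t i j
    have hfun : (fun x => σ t x i j) = fun x =>
        ζ t x / 2 * (2⁻¹ * (jac (v t) x i j + jac (v t) x j i))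
        + 3 * ζ t x / 4 * (jac (v t) x 0 0 + jac (v t) x 1 1) * (if i = j then (1:ℝ) else 0)
        - P / 2 * (if i = j then (1:ℝ) else 0) := funext fun x => hσentry t x i j
    rw [hfun]
    refine ContDiff.sub (ContDiff.add ?_ ?_) contDiff_const
    · exact ((hζt t).div_const 2).mul
        (contDiff_const.mul (((jac_cd hv t i j).of_le (by simp)).add
          ((jac_cd hv t j i).of_le (by simp))))
    · exact (((contDiff_const.mul (hζt t)).div_const 4).mul
        (((jac_cd hv t 0 0).of_le (by simp)).add ((jac_cd hv t 1 1).of_le (by simp)))).mul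
        contDiff_const
  -- R vanishes outside K
  have hRzero : ∀ t x, x ∉ K → ∀ i : Fin 2, R t x i = 0 := by
    intro t x hx i
    have hm := hmom t x i
    have hd : (fun s => v s x i) = fun _ => (0:ℝ) := funext fun s => v_zero hsupp hx s i
    rw [hd, deriv_const] at hm
    have hdiv : ∀ j : Fin 2, fderiv ℝ (fun y => σ t y i j) x (EuclideanSpace.single j 1) = 0 := by
      intro j
      have hev : (fun y => σ t y i j) =ᶠ[nhds x]
          fun _ => -(P / 2 * (if i = j then (1:ℝ) else 0)) := by
        filter_upwards [hK.isClosed.isOpen_compl.mem_nhds hx] with y hy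
        rw [hσentry t y i j, jac_zero hK hsupp hy t]
        simp
      rw [hev.fderiv_eq, fderiv_fun_const]
      rfl
    simp only [Fin.sum_univ_two, hdiv, v_zero hsupp hx] at hm
    simp at hm
    linarith [hm]
  -- supports
  have hsvt : ∀ t (i : Fin 2), support (fun x => v t x i) ⊆ K := fun t i =>
    support_subset_iff'.2 fun x hx => v_zero hsupp hx t i
  have hsjt : ∀ t (i j : Fin 2), support (fun x => jac (v t) x i j) ⊆ K := fun t i j =>
    support_subset_iff'.2 fun x hx => by rw [jac_zero hK hsupp hx t]; rfl
  have intK : ∀ {f : E2 → ℝ}, Continuous f → support f ⊆ K → Integrable f :=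
    fun hf hs => aux_integrable hK hf hs
  have iadd : ∀ {f g : E2 → ℝ}, Integrable f → Integrable g →
      Integrable fun x => f x + g x := fun hf hg => hf.add hg
  have isub : ∀ {f g : E2 → ℝ}, Integrable f → Integrable g →
      Integrable fun x => f x - g x := fun hf hg => hf.sub hg
  -- joint continuity of the time-dependent integrands
  have hgjoint : Continuous (uncurry fun t x => ∑ i : Fin 2, 2 * v t x i * dtv v i (t, x)) := by
    apply continuous_finset_sum
    intro i _
    exact (continuous_const.mul ((pw_cd hv i).continuous)).mul (dtv_cont hv i)
  have hgsupp : ∀ t, support (fun x => ∑ i : Fin 2, 2 * v t x i * dtv v i (t, x)) ⊆ K :=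
    fun t => support_subset_iff'.2 fun x hx => by simp [v_zero hsupp hx]
  have hYsupp : ∀ t, support (fun x => ‖v t x‖ ^ 2) ⊆ K :=
    fun t => support_subset_iff'.2 fun x hx => by rw [v_zeroE hsupp hx t]; simp
  -- derivative of the energy
  have hYd : ∀ t₀ : ℝ, HasDerivAt (fun t => ∫ x, ‖v t x‖ ^ 2)
      (∫ x, ∑ i : Fin 2, 2 * v t₀ x i * dtv v i (t₀, x)) t₀ := by
    intro t₀
    apply aux_hasDeriv_param (f := fun t x => ‖v t x‖ ^ 2) hK (by exact hv.continuous.norm.pow 2) hgjoint hYsupp hgsupp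
    intro t x
    have : (fun s => ‖v s x‖ ^ 2) = fun s => ∑ i : Fin 2, (v s x i) ^ 2 :=
      funext fun s => norm_sq_eq (v s x)
    rw [this]
    exact HasDerivAt.fun_sum fun i _ => by
      simpa using (hasDerivAt_dtv hv i t x).fun_pow 2
  -- continuity in time of the various integrals
  have hec : Continuous fun t => ∫ x, ∑ i : Fin 2, 2 * v t x i * dtv v i (t, x) :=
    aux_cont_param hK hgjoint hgsupp
  have hYc : Continuous fun t => ∫ x, ‖v t x‖ ^ 2 :=
    aux_cont_param (f := fun t x => ‖v t x‖ ^ 2) hK (by exact hv.continuous.norm.pow 2) hYsupp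
  have hGc : Continuous fun t => ∫ x, frobSq (jac (v t) x) := by
    apply aux_cont_param hK
    · have : (uncurry fun t x => frobSq (jac (v t) x)) = fun p : ℝ × E2 =>
          jac (v p.1) p.2 0 0 ^ 2 + jac (v p.1) p.2 0 1 ^ 2 + jac (v p.1) p.2 1 0 ^ 2
            + jac (v p.1) p.2 1 1 ^ 2 := funext fun p => frobSq_expand _
      rw [this]
      exact ((((jac_cont hv 0 0).pow 2).add ((jac_cont hv 0 1).pow 2)).add
        ((jac_cont hv 1 0).pow 2)).add ((jac_cont hv 1 1).pow 2)
    · intro t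
      exact support_subset_iff'.2 fun x hx => by
        rw [frobSq_expand, jac_zero hK hsupp hx t]
        simp
  have hWc : Continuous fun t => ∫ x, ‖R t x‖ ^ 2 := by
    apply aux_cont_param (f := fun t x => ‖R t x‖ ^ 2) hK (by exact hR.norm.pow 2)
    intro t
    exact support_subset_iff'.2 fun x hx => by
      rw [norm_sq_eq]
      simp [hRzero t x hx]
  -- the core differential inequality, for each time t
  have key : ∀ t : ℝ, ρ * h * (∫ x, ∑ i : Fin 2, 2 * v t x i * dtv v i (t, x))
      + (2 * ρw * Cw1 * (∫ x, ‖v t x‖ ^ 2) + ζmin / 4 * ∫ x, frobSq (jac (v t) x))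
      ≤ 4 * cp / ζmin * ∫ x, ‖R t x‖ ^ 2 := by
    intro t
    have hvt : ∀ i : Fin 2, Continuous fun x => v t x i := fun i => (vt_cd hv t i).continuous
    have hvtc : Continuous (v t) := hv.continuous.comp (continuous_const.prodMk continuous_id)
    have hjc : ∀ i j : Fin 2, Continuous fun x => jac (v t) x i j :=
      fun i j => (jac_cd hv t i j).continuous
    have hRti : ∀ i : Fin 2, Continuous fun x => R t x i := fun i =>
      (EuclideanSpace.proj i).continuous.comp (hR.comp (continuous_const.prodMk continuous_id))
    have hσc : ∀ i j : Fin 2, Continuous fun x => σ t x i j := fun i j => (hσcd t i j).continuous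
    have hdσ : ∀ i j : Fin 2, Continuous fun x =>
        fderiv ℝ (fun y => σ t y i j) x (EuclideanSpace.single j 1) :=
      fun i j => ((hσcd t i j).continuous_fderiv one_ne_zero).clm_apply continuous_const
    have hζc : Continuous (ζ t) := (hζt t).continuous
    -- integrability
    have iv2 : Integrable fun x => ‖v t x‖ ^ 2 := intK (hvtc.norm.pow 2) (hYsupp t)
    have ifrob : Integrable fun x => frobSq (jac (v t) x) := by
      apply intK
      · have : (fun x => frobSq (jac (v t) x)) = fun x => jac (v t) x 0 0 ^ 2
            + jac (v t) x 0 1 ^ 2 + jac (v t) x 1 0 ^ 2 + jac (v t) x 1 1 ^ 2 :=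
          funext fun x => frobSq_expand _
        rw [this]
        exact ((((hjc 0 0).pow 2).add ((hjc 0 1).pow 2)).add ((hjc 1 0).pow 2)).add
          ((hjc 1 1).pow 2)
      · exact support_subset_iff'.2 fun x hx => by
          rw [frobSq_expand, jac_zero hK hsupp hx t]; simp
    have iIv : ∀ i j : Fin 2, Integrable fun x =>
        v t x i * fderiv ℝ (fun y => σ t y i j) x (EuclideanSpace.single j 1) :=
      fun i j => intK ((hvt i).mul (hdσ i j)) ((support_mul_subset_left _ _).trans (hsvt t i))
    have iJσ : ∀ i j : Fin 2, Integrable fun x => jac (v t) x i j * σ t x i j :=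
      fun i j => intK ((hjc i j).mul (hσc i j)) ((support_mul_subset_left _ _).trans (hsjt t i j))
    have iA2 : Integrable fun x => ∑ i : Fin 2, 2 * v t x i *
        (∑ j : Fin 2, fderiv ℝ (fun y => σ t y i j) x (EuclideanSpace.single j 1)) := by
      apply intK
      · exact continuous_finset_sum _ fun i _ => (continuous_const.mul (hvt i)).mul
          (continuous_finset_sum _ fun j _ => hdσ i j)
      · exact support_subset_iff'.2 fun x hx => by simp [v_zero hsupp hx]
    have iR2 : Integrable fun x => ∑ i : Fin 2, 2 * v t x i * R t x i := by
      apply intK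
      · exact continuous_finset_sum _ fun i _ => (continuous_const.mul (hvt i)).mul (hRti i)
      · exact support_subset_iff'.2 fun x hx => by simp [v_zero hsupp hx]
    have iad : Integrable fun x => jac (v t) x 0 0 * jac (v t) x 1 1 :=
      intK ((hjc 0 0).mul (hjc 1 1)) ((support_mul_subset_left _ _).trans (hsjt t 0 0))
    have ibc : Integrable fun x => jac (v t) x 0 1 * jac (v t) x 1 0 :=
      intK ((hjc 0 1).mul (hjc 1 0)) ((support_mul_subset_left _ _).trans (hsjt t 0 1))
    have ij1 : ∀ i j : Fin 2, Integrable fun x => jac (v t) x i j :=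
      fun i j => intK (hjc i j) (hsjt t i j)
    have iQζ : Integrable fun x => ζ t x / 2 * (jac (v t) x 0 0 ^ 2 + jac (v t) x 1 1 ^ 2)
        + ζ t x / 4 * (jac (v t) x 0 1 + jac (v t) x 1 0) ^ 2
        + 3 * ζ t x / 4 * (jac (v t) x 0 0 + jac (v t) x 1 1) ^ 2 := by
      apply intK
      · exact (((hζc.div_const 2).mul (((hjc 0 0).pow 2).add ((hjc 1 1).pow 2))).add
          ((hζc.div_const 4).mul (((hjc 0 1).add (hjc 1 0)).pow 2))).add
          (((continuous_const.mul hζc).div_const 4).mul (((hjc 0 0).add (hjc 1 1)).pow 2))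
      · exact support_subset_iff'.2 fun x hx => by simp [jac_zero hK hsupp hx t]
    have iQm : Integrable fun x => ζmin / 2 * (jac (v t) x 0 0 ^ 2 + jac (v t) x 1 1 ^ 2)
        + ζmin / 4 * (jac (v t) x 0 1 + jac (v t) x 1 0) ^ 2
        + 3 * ζmin / 4 * (jac (v t) x 0 0 + jac (v t) x 1 1) ^ 2 := by
      apply intK
      · exact ((continuous_const.mul (((hjc 0 0).pow 2).add ((hjc 1 1).pow 2))).add
          (continuous_const.mul (((hjc 0 1).add (hjc 1 0)).pow 2))).add
          (continuous_const.mul (((hjc 0 0).add (hjc 1 1)).pow 2))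
      · exact support_subset_iff'.2 fun x hx => by simp [jac_zero hK hsupp hx t]
    -- energy split via the momentum equation
    have hsplit : ρ * h * (∫ x, ∑ i : Fin 2, 2 * v t x i * dtv v i (t, x))
        = (∫ x, ∑ i : Fin 2, 2 * v t x i *
            (∑ j : Fin 2, fderiv ℝ (fun y => σ t y i j) x (EuclideanSpace.single j 1)))
          + (∫ x, ∑ i : Fin 2, 2 * v t x i * R t x i)
          - 2 * ρw * Cw1 * (∫ x, ‖v t x‖ ^ 2) := by
      rw [← integral_const_mul]
      have hfun : (fun x => ρ * h * ∑ i : Fin 2, 2 * v t x i * dtv v i (t, x))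
          = fun x => (∑ i : Fin 2, 2 * v t x i *
              (∑ j : Fin 2, fderiv ℝ (fun y => σ t y i j) x (EuclideanSpace.single j 1)))
            + ((∑ i : Fin 2, 2 * v t x i * R t x i) - 2 * ρw * Cw1 * ‖v t x‖ ^ 2) := by
        funext x
        have h0 := hmom t x 0
        have h1 := hmom t x 1
        rw [show deriv (fun s => v s x 0) t = dtv v 0 (t, x) from
          (hasDerivAt_dtv hv 0 t x).deriv] at h0
        rw [show deriv (fun s => v s x 1) t = dtv v 1 (t, x) from
          (hasDerivAt_dtv hv 1 t x).deriv] at h1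
        rw [if_pos rfl] at h0
        rw [if_neg (by decide)] at h1
        rw [norm_sq_eq]
        simp only [Fin.sum_univ_two] at h0 h1 ⊢
        linear_combination (2 * v t x 0) * h0 + (2 * v t x 1) * h1
      rw [hfun, integral_add iA2 (isub iR2 (iv2.const_mul (2 * ρw * Cw1))),
        integral_sub iR2 (iv2.const_mul (2 * ρw * Cw1)), integral_const_mul]
      ring
    -- integration by parts
    have e1 : ∀ i j : Fin 2, (∫ x, v t x i *
          fderiv ℝ (fun y => σ t y i j) x (EuclideanSpace.single j 1))
        = - ∫ x, fderiv ℝ (fun x => v t x i) x (EuclideanSpace.single j 1) * σ t x i j :=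
      fun i j => ibp hK _ ((vt_cd hv t i).of_le (by simp)) (hσcd t i j) (hsvt t i)
    have hIA : (∫ x, ∑ i : Fin 2, 2 * v t x i *
          (∑ j : Fin 2, fderiv ℝ (fun y => σ t y i j) x (EuclideanSpace.single j 1)))
        = -2 * ∫ x, frobInner (jac (v t) x) (σ t x) := by
      have hfun : (fun x => ∑ i : Fin 2, 2 * v t x i *
            (∑ j : Fin 2, fderiv ℝ (fun y => σ t y i j) x (EuclideanSpace.single j 1)))
          = fun x => 2 * (v t x 0 * fderiv ℝ (fun y => σ t y 0 0) x (EuclideanSpace.single 0 1))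
            + (2 * (v t x 0 * fderiv ℝ (fun y => σ t y 0 1) x (EuclideanSpace.single 1 1))
            + (2 * (v t x 1 * fderiv ℝ (fun y => σ t y 1 0) x (EuclideanSpace.single 0 1))
            + 2 * (v t x 1 * fderiv ℝ (fun y => σ t y 1 1) x (EuclideanSpace.single 1 1)))) := by
        funext x; simp only [Fin.sum_univ_two]; ring
      have hfrob : (fun x => frobInner (jac (v t) x) (σ t x))
          = fun x => jac (v t) x 0 0 * σ t x 0 0 + (jac (v t) x 0 1 * σ t x 0 1
            + (jac (v t) x 1 0 * σ t x 1 0 + jac (v t) x 1 1 * σ t x 1 1)) :=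
        funext fun x => by rw [frobInner_expand]; ring
      rw [hfun, integral_add ((iIv 0 0).const_mul 2) (iadd ((iIv 0 1).const_mul 2)
          (iadd ((iIv 1 0).const_mul 2) ((iIv 1 1).const_mul 2))),
        integral_add ((iIv 0 1).const_mul 2) (iadd ((iIv 1 0).const_mul 2)
          ((iIv 1 1).const_mul 2)),
        integral_add ((iIv 1 0).const_mul 2) ((iIv 1 1).const_mul 2),
        integral_const_mul, integral_const_mul, integral_const_mul, integral_const_mul,
        e1 0 0, e1 0 1, e1 1 0, e1 1 1, hfrob,
        integral_add (iJσ 0 0) (iadd (iJσ 0 1) (iadd (iJσ 1 0) (iJσ 1 1))),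
        integral_add (iJσ 0 1) (iadd (iJσ 1 0) (iJσ 1 1)),
        integral_add (iJσ 1 0) (iJσ 1 1)]
      simp only [jac_apply]
      ring
    -- the divergence integrates to zero
    have h00 : ∫ x, jac (v t) x 0 0 = 0 := by
      simpa only [jac_apply] using I1' hK (vt_cd hv t 0) (hsvt t 0) (EuclideanSpace.single 0 1)
    have h11 : ∫ x, jac (v t) x 1 1 = 0 := by
      simpa only [jac_apply] using I1' hK (vt_cd hv t 1) (hsvt t 1) (EuclideanSpace.single 1 1)
    -- Korn-type identity from double integration by parts
    have hI2 : ∫ x, jac (v t) x 0 1 * jac (v t) x 1 0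
        = ∫ x, jac (v t) x 0 0 * jac (v t) x 1 1 := by
      simpa only [jac_apply] using I2' hK (vt_cd hv t 0) (vt_cd hv t 1) (hsvt t 0)
        (EuclideanSpace.single 1 1) (EuclideanSpace.single 0 1)
    -- pointwise expansion of the dissipation
    have hqpt : ∀ x, frobInner (jac (v t) x) (σ t x)
        = (ζ t x / 2 * (jac (v t) x 0 0 ^ 2 + jac (v t) x 1 1 ^ 2)
          + ζ t x / 4 * (jac (v t) x 0 1 + jac (v t) x 1 0) ^ 2
          + 3 * ζ t x / 4 * (jac (v t) x 0 0 + jac (v t) x 1 1) ^ 2)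
          - P / 2 * (jac (v t) x 0 0 + jac (v t) x 1 1) := by
      intro x
      rw [frobInner_expand, hσentry t x 0 0, hσentry t x 0 1, hσentry t x 1 0,
        hσentry t x 1 1]
      norm_num
      ring
    have hfrobint : (∫ x, frobInner (jac (v t) x) (σ t x))
        = ∫ x, (ζ t x / 2 * (jac (v t) x 0 0 ^ 2 + jac (v t) x 1 1 ^ 2)
          + ζ t x / 4 * (jac (v t) x 0 1 + jac (v t) x 1 0) ^ 2
          + 3 * ζ t x / 4 * (jac (v t) x 0 0 + jac (v t) x 1 1) ^ 2) := by
      have hfun : (fun x => frobInner (jac (v t) x) (σ t x))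
          = fun x => (ζ t x / 2 * (jac (v t) x 0 0 ^ 2 + jac (v t) x 1 1 ^ 2)
            + ζ t x / 4 * (jac (v t) x 0 1 + jac (v t) x 1 0) ^ 2
            + 3 * ζ t x / 4 * (jac (v t) x 0 0 + jac (v t) x 1 1) ^ 2)
            - (P / 2 * jac (v t) x 0 0 + P / 2 * jac (v t) x 1 1) :=
        funext fun x => by rw [hqpt x]; ring
      rw [hfun, integral_sub iQζ (iadd ((ij1 0 0).const_mul _) ((ij1 1 1).const_mul _)),
        integral_add ((ij1 0 0).const_mul _) ((ij1 1 1).const_mul _),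
        integral_const_mul, integral_const_mul, h00, h11]
      ring
    have hQmono : (∫ x, (ζmin / 2 * (jac (v t) x 0 0 ^ 2 + jac (v t) x 1 1 ^ 2)
          + ζmin / 4 * (jac (v t) x 0 1 + jac (v t) x 1 0) ^ 2
          + 3 * ζmin / 4 * (jac (v t) x 0 0 + jac (v t) x 1 1) ^ 2))
        ≤ ∫ x, (ζ t x / 2 * (jac (v t) x 0 0 ^ 2 + jac (v t) x 1 1 ^ 2)
          + ζ t x / 4 * (jac (v t) x 0 1 + jac (v t) x 1 0) ^ 2
          + 3 * ζ t x / 4 * (jac (v t) x 0 0 + jac (v t) x 1 1) ^ 2) := by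
      apply integral_mono iQm iQζ
      intro x
      have hz := sub_nonneg.2 (hζlb t x)
      nlinarith [mul_nonneg hz (sq_nonneg (jac (v t) x 0 0)),
        mul_nonneg hz (sq_nonneg (jac (v t) x 1 1)),
        mul_nonneg hz (sq_nonneg (jac (v t) x 0 1 + jac (v t) x 1 0)),
        mul_nonneg hz (sq_nonneg (jac (v t) x 0 0 + jac (v t) x 1 1))]
    have hQkorn : ζmin / 4 * (∫ x, frobSq (jac (v t) x))
        ≤ ∫ x, (ζmin / 2 * (jac (v t) x 0 0 ^ 2 + jac (v t) x 1 1 ^ 2)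
          + ζmin / 4 * (jac (v t) x 0 1 + jac (v t) x 1 0) ^ 2
          + 3 * ζmin / 4 * (jac (v t) x 0 0 + jac (v t) x 1 1) ^ 2) := by
      have hswap : (∫ x, ((ζmin / 2 * (jac (v t) x 0 0 ^ 2 + jac (v t) x 1 1 ^ 2)
            + ζmin / 4 * (jac (v t) x 0 1 + jac (v t) x 1 0) ^ 2
            + 3 * ζmin / 4 * (jac (v t) x 0 0 + jac (v t) x 1 1) ^ 2)
            + (ζmin / 2 * (jac (v t) x 0 0 * jac (v t) x 1 1)
              - ζmin / 2 * (jac (v t) x 0 1 * jac (v t) x 1 0))))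
          = ∫ x, (ζmin / 2 * (jac (v t) x 0 0 ^ 2 + jac (v t) x 1 1 ^ 2)
            + ζmin / 4 * (jac (v t) x 0 1 + jac (v t) x 1 0) ^ 2
            + 3 * ζmin / 4 * (jac (v t) x 0 0 + jac (v t) x 1 1) ^ 2) := by
        rw [integral_add iQm (isub (iad.const_mul _) (ibc.const_mul _)),
          integral_sub (iad.const_mul _) (ibc.const_mul _),
          integral_const_mul, integral_const_mul, hI2]
        ring
      calc ζmin / 4 * (∫ x, frobSq (jac (v t) x))
          = ∫ x, ζmin / 4 * frobSq (jac (v t) x) := (integral_const_mul _ _).symm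
        _ ≤ ∫ x, ((ζmin / 2 * (jac (v t) x 0 0 ^ 2 + jac (v t) x 1 1 ^ 2)
            + ζmin / 4 * (jac (v t) x 0 1 + jac (v t) x 1 0) ^ 2
            + 3 * ζmin / 4 * (jac (v t) x 0 0 + jac (v t) x 1 1) ^ 2)
            + (ζmin / 2 * (jac (v t) x 0 0 * jac (v t) x 1 1)
              - ζmin / 2 * (jac (v t) x 0 1 * jac (v t) x 1 0))) := by
            apply integral_mono (ifrob.const_mul _)
              (iadd iQm (isub (iad.const_mul _) (ibc.const_mul _)))
            intro x
            simp only [frobSq_expand]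
            nlinarith [mul_nonneg hζmin.le (sq_nonneg (jac (v t) x 0 0 + jac (v t) x 1 1))]
        _ = _ := hswap
    have hdiss : ζmin / 4 * (∫ x, frobSq (jac (v t) x))
        ≤ ∫ x, frobInner (jac (v t) x) (σ t x) := by
      rw [hfrobint]; linarith
    -- bound on the forcing term
    have hforce : (∫ x, ∑ i : Fin 2, 2 * v t x i * R t x i)
        ≤ ζmin / 4 * (∫ x, frobSq (jac (v t) x)) + 4 * cp / ζmin * (∫ x, ‖R t x‖ ^ 2) := by
      have hpt2 : ∀ x, ∑ i : Fin 2, 2 * v t x i * R t x i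
          ≤ ζmin / (4 * cp) * ‖v t x‖ ^ 2 + 4 * cp / ζmin * ‖R t x‖ ^ 2 := by
        intro x
        rw [← sub_nonneg, norm_sq_eq, norm_sq_eq]
        have hid : ζmin / (4 * cp) * (∑ i : Fin 2, (v t x i) ^ 2)
            + 4 * cp / ζmin * (∑ i : Fin 2, (R t x i) ^ 2)
            - ∑ i : Fin 2, 2 * v t x i * R t x i
            = ((ζmin * v t x 0 - 4 * cp * R t x 0) ^ 2
              + (ζmin * v t x 1 - 4 * cp * R t x 1) ^ 2) / (4 * cp * ζmin) := by
          simp only [Fin.sum_univ_two]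
          field_simp
          ring
        rw [hid]
        positivity
      have h1 : (∫ x, ∑ i : Fin 2, 2 * v t x i * R t x i)
          ≤ ∫ x, (ζmin / (4 * cp) * ‖v t x‖ ^ 2 + 4 * cp / ζmin * ‖R t x‖ ^ 2) :=
        integral_mono iR2 (iadd (iv2.const_mul _) ((hRL2 t).const_mul _)) hpt2
      rw [integral_add (iv2.const_mul _) ((hRL2 t).const_mul _), integral_const_mul,
        integral_const_mul] at h1
      have h2 : ζmin / (4 * cp) * (∫ x, ‖v t x‖ ^ 2)
          ≤ ζmin / (4 * cp) * (cp * ∫ x, frobSq (jac (v t) x)) :=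
        mul_le_mul_of_nonneg_left (hPoincare t) (by positivity)
      have h3 : ζmin / (4 * cp) * (cp * ∫ x, frobSq (jac (v t) x))
          = ζmin / 4 * ∫ x, frobSq (jac (v t) x) := by
        field_simp
      linarith
    linarith [hsplit, hIA, hdiss, hforce]
  -- assemble via the fundamental theorem of calculus
  have hftc : (∫ t in (0:ℝ)..T, (∫ x, ∑ i : Fin 2, 2 * v t x i * dtv v i (t, x)))
      = (∫ x, ‖v T x‖ ^ 2) - (∫ x, ‖v 0 x‖ ^ 2) :=
    intervalIntegral.integral_eq_sub_of_hasDerivAt (fun t _ => hYd t)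
      (hec.intervalIntegrable 0 T)
  have hiE : IntervalIntegrable
      (fun t => ρ * h * (∫ x, ∑ i : Fin 2, 2 * v t x i * dtv v i (t, x))) volume 0 T :=
    (continuous_const.mul hec).intervalIntegrable 0 T
  have hiG : IntervalIntegrable (fun t => 2 * ρw * Cw1 * (∫ x, ‖v t x‖ ^ 2)
      + ζmin / 4 * ∫ x, frobSq (jac (v t) x)) volume 0 T :=
    ((continuous_const.mul hYc).add (continuous_const.mul hGc)).intervalIntegrable 0 T
  have hmono : (∫ t in (0:ℝ)..T, (ρ * h * (∫ x, ∑ i : Fin 2, 2 * v t x i * dtv v i (t, x))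
        + (2 * ρw * Cw1 * (∫ x, ‖v t x‖ ^ 2) + ζmin / 4 * ∫ x, frobSq (jac (v t) x))))
      ≤ ∫ t in (0:ℝ)..T, 4 * cp / ζmin * (∫ x, ‖R t x‖ ^ 2) :=
    intervalIntegral.integral_mono_on hT (hiE.add hiG)
      ((continuous_const.mul hWc).intervalIntegrable 0 T) (fun t _ => key t)
  have hsplitT : (∫ t in (0:ℝ)..T, (ρ * h * (∫ x, ∑ i : Fin 2, 2 * v t x i * dtv v i (t, x))
        + (2 * ρw * Cw1 * (∫ x, ‖v t x‖ ^ 2) + ζmin / 4 * ∫ x, frobSq (jac (v t) x))))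
      = ρ * h * ((∫ x, ‖v T x‖ ^ 2) - (∫ x, ‖v 0 x‖ ^ 2))
        + ∫ t in (0:ℝ)..T, (2 * ρw * Cw1 * (∫ x, ‖v t x‖ ^ 2)
          + ζmin / 4 * ∫ x, frobSq (jac (v t) x)) := by
    rw [intervalIntegral.integral_add hiE hiG, intervalIntegral.integral_const_mul, hftc]
  have hconst : (∫ t in (0:ℝ)..T, 4 * cp / ζmin * (∫ x, ‖R t x‖ ^ 2))
      = 4 * cp / ζmin * ∫ t in (0:ℝ)..T, ∫ x, ‖R t x‖ ^ 2 :=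
    intervalIntegral.integral_const_mul _ _
  linarith [hmono, hsplitT, hconst]

end
end

section
/- Let v : ℝ² → ℝ² be a smooth vector field with compact support, let ζ : ℝ² → ℝ be continuous with ζ(x) ≥ ζ_min > 0 for all x, let P ∈ ℝ be a constant, let Dv(x) be the Jacobian of v, E(x) = (Dv(x)+Dv(x)ᵀ)/2, and define σ(x) = (ζ(x)/2)E(x) + (3ζ(x)/4)tr(E(x))I − (P/2)I. Then ∫_{ℝ²} ⟨σ(x), Dv(x)⟩ dx ≥ (ζ_min/4) ∫_{ℝ²} ‖Dv(x)‖_F² dx. -/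
open MeasureTheory Matrix Function

noncomputable section

open scoped ContDiff

/-- The directional derivative of a smooth function is smooth. -/
lemma vp_d1 {f : E2 → ℝ} (hf : ContDiff ℝ ∞ f) (w : E2) :
    ContDiff ℝ ∞ (fun x => fderiv ℝ f x w) :=
  (hf.fderiv_right (by simp)).clm_apply contDiff_const

lemma vp_dint {f : E2 → ℝ} (hf : ContDiff ℝ ∞ f) (hfs : HasCompactSupport f) (w : E2) :
    Integrable (fun x => fderiv ℝ f x w) :=
  ((vp_d1 hf w).continuous).integrable_of_hasCompactSupport (hfs.fderiv_apply ℝ w)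

/-- The integral of a directional derivative of a smooth compactly supported function
vanishes. -/
lemma vp_integral_dderiv_eq_zero {g : E2 → ℝ} (hg : ContDiff ℝ ∞ g)
    (hgs : HasCompactSupport g) (w : E2) : ∫ x, fderiv ℝ g x w = 0 := by
  obtain ⟨R, hR0, hR⟩ : ∃ R, 0 < R ∧ tsupport g ⊆ Metric.ball (0 : E2) R := by
    rcases (hgs.isBounded).subset_closedBall 0 with ⟨R, hR⟩
    exact ⟨max R 0 + 1, by positivity,
      hR.trans ((Metric.closedBall_subset_ball
        (by nlinarith [le_max_left R 0, le_max_right R 0])).trans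
        (Metric.ball_subset_ball (le_refl _)))⟩
  set χ : ContDiffBump (0 : E2) := ⟨R, R + 1, hR0, by linarith⟩
  have hχ1 : ∀ x ∈ Metric.ball (0 : E2) R, (χ : E2 → ℝ) x = 1 := fun x hx =>
    χ.one_of_mem_closedBall (Metric.ball_subset_closedBall hx)
  have hχd0 : ∀ x ∈ Metric.ball (0 : E2) R, fderiv ℝ (χ : E2 → ℝ) x = 0 := by
    intro x hx
    have : (χ : E2 → ℝ) =ᶠ[nhds x] fun _ => 1 :=
      Filter.eventuallyEq_of_mem (Metric.isOpen_ball.mem_nhds hx) hχ1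
    rw [this.fderiv_eq]; exact fderiv_const_apply _
  have hg0 : ∀ x, x ∉ tsupport g → fderiv ℝ g x = 0 := fun x hx => by
    have := support_fderiv_subset (𝕜 := ℝ) (f := g)
    by_contra h; exact hx (this h)
  have key := integral_mul_fderiv_eq_neg_fderiv_mul_of_integrable
    (μ := (volume : Measure E2)) (f := (χ : E2 → ℝ)) (g := g) (v := w)
    ?_ ?_ ?_ (fun x _ => (χ.contDiff (n := (⊤:ℕ∞))).differentiable (by norm_cast) x)
    (fun x _ => hg.differentiable (by norm_cast) x)
  · have h1 : (fun x => (χ : E2 → ℝ) x * fderiv ℝ g x w) = fun x => fderiv ℝ g x w := by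
      funext x
      by_cases hx : x ∈ tsupport g
      · rw [hχ1 x (hR hx), one_mul]
      · rw [hg0 x hx]; simp
    have h2 : (fun x => fderiv ℝ (χ : E2 → ℝ) x w * g x) = fun _ => (0 : ℝ) := by
      funext x
      by_cases hx : x ∈ tsupport g
      · rw [hχd0 x (hR hx)]; simp
      · have : g x = 0 := image_eq_zero_of_notMem_tsupport hx
        simp [this]
    rw [h1, h2] at key
    simpa using key
  · apply Continuous.integrable_of_hasCompactSupport
    · exact ((vp_d1 (χ.contDiff (n := (⊤:ℕ∞))) w).continuous).mul (hg.continuous)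
    · exact (χ.hasCompactSupport.fderiv_apply ℝ w).mul_right
  · apply Continuous.integrable_of_hasCompactSupport
    · exact χ.continuous.mul ((vp_d1 hg w).continuous)
    · exact (hgs.fderiv_apply ℝ w).mul_left
  · apply Continuous.integrable_of_hasCompactSupport
    · exact χ.continuous.mul hg.continuous
    · exact hgs.mul_left

/-- Symmetry of second derivatives, in directional form. -/
lemma vp_fderiv_dapply_comm {f : E2 → ℝ} (hf : ContDiff ℝ ∞ f) (u w : E2) (x : E2) :
    fderiv ℝ (fun y => fderiv ℝ f y u) x w = fderiv ℝ (fun y => fderiv ℝ f y w) x u := by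
  have hdf : Differentiable ℝ (fderiv ℝ f) :=
    (hf.fderiv_right (m := 1) (by norm_cast)).differentiable one_ne_zero
  have hsymm : IsSymmSndFDerivAt ℝ f x :=
    (hf.contDiffAt).isSymmSndFDerivAt (by rw [minSmoothness_of_isRCLikeNormedField]; norm_cast)
  have h1 : ∀ z : E2, fderiv ℝ (fun y => fderiv ℝ f y z) x
      = (fderiv ℝ (fderiv ℝ f) x).flip z := by
    intro z
    have := fderiv_clm_apply (hdf x) (differentiableAt_const z)
    simpa using this
  rw [h1 u, h1 w]
  simp only [ContinuousLinearMap.flip_apply]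
  exact hsymm w u

/-- The Korn-type identity: cross derivatives can be exchanged under the integral. -/
lemma vp_integral_dd_comm {f g : E2 → ℝ} (hf : ContDiff ℝ ∞ f) (hfs : HasCompactSupport f)
    (hg : ContDiff ℝ ∞ g) (hgs : HasCompactSupport g) (u w : E2) :
    ∫ x, fderiv ℝ f x u * fderiv ℝ g x w = ∫ x, fderiv ℝ f x w * fderiv ℝ g x u := by
  have hF : ContDiff ℝ ∞ (fun x => fderiv ℝ f x u) := vp_d1 hf u
  have hG : ContDiff ℝ ∞ (fun x => fderiv ℝ f x w) := vp_d1 hf w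
  have int1 : Integrable (fun x => fderiv ℝ (fun y => fderiv ℝ f y u) x w * g x) := by
    apply Continuous.integrable_of_hasCompactSupport
    · exact ((vp_d1 hF w).continuous).mul hg.continuous
    · exact ((hfs.fderiv_apply ℝ u).fderiv_apply ℝ w).mul_right
  have int2 : Integrable (fun x => fderiv ℝ f x u * fderiv ℝ g x w) := by
    apply Continuous.integrable_of_hasCompactSupport
    · exact (hF.continuous).mul (vp_d1 hg w).continuous
    · exact (hfs.fderiv_apply ℝ u).mul_right
  have int3 : Integrable (fun x => fderiv ℝ f x u * g x) := by
    apply Continuous.integrable_of_hasCompactSupport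
    · exact (hF.continuous).mul hg.continuous
    · exact (hfs.fderiv_apply ℝ u).mul_right
  have ibp1 := integral_mul_fderiv_eq_neg_fderiv_mul_of_integrable
    (μ := (volume : Measure E2)) (f := fun x => fderiv ℝ f x u) (g := g) (v := w)
    int1 int2 int3 (fun x _ => hF.differentiable (by norm_cast) x) (fun x _ => hg.differentiable (by norm_cast) x)
  have int4 : Integrable (fun x => fderiv ℝ g x u * fderiv ℝ f x w) := by
    apply Continuous.integrable_of_hasCompactSupport
    · exact ((vp_d1 hg u).continuous).mul hG.continuous
    · exact (hgs.fderiv_apply ℝ u).mul_right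
  have int5 : Integrable (fun x => g x * fderiv ℝ (fun y => fderiv ℝ f y w) x u) := by
    apply Continuous.integrable_of_hasCompactSupport
    · exact hg.continuous.mul ((vp_d1 hG u).continuous)
    · exact (hgs).mul_right
  have int6 : Integrable (fun x => g x * fderiv ℝ f x w) := by
    apply Continuous.integrable_of_hasCompactSupport
    · exact hg.continuous.mul hG.continuous
    · exact hgs.mul_right
  have ibp2 := integral_mul_fderiv_eq_neg_fderiv_mul_of_integrable
    (μ := (volume : Measure E2)) (f := g) (g := fun x => fderiv ℝ f x w) (v := u)
    int4 int5 int6 (fun x _ => hg.differentiable (by norm_cast) x) (fun x _ => hG.differentiable (by norm_cast) x)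
  rw [ibp1]
  have hswap : (fun x => fderiv ℝ (fun y => fderiv ℝ f y u) x w * g x)
      = fun x => g x * fderiv ℝ (fun y => fderiv ℝ f y w) x u := by
    funext x; rw [vp_fderiv_dapply_comm hf u w x, mul_comm]
  rw [hswap, ibp2]
  simp only [neg_neg]
  congr 1; funext x; ring

/-- Integrated coercivity of the viscous-plastic stress term: for a smooth,
compactly supported velocity field and
`σ = (ζ/2)E + (3ζ/4)tr(E)I − (P/2)I` with `ζ ≥ ζ_min > 0`,
`∫⟨σ, Dv⟩ ≥ (ζ_min/4)∫‖Dv‖²`. -/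
theorem vp_stress_integrated_coercivity
    (v : E2 → E2) (hv : ContDiff ℝ (⊤ : ℕ∞) v) (hsupp : HasCompactSupport v)
    (ζ : E2 → ℝ) (hζc : Continuous ζ)
    (ζmin : ℝ) (hζmin : 0 < ζmin) (hζ : ∀ x, ζmin ≤ ζ x)
    (P : ℝ)
    (σ : E2 → Matrix (Fin 2) (Fin 2) ℝ)
    (hσ : ∀ x, σ x = (ζ x / 2) • strain v x
        + (3 * ζ x / 4 * (strain v x).trace) • (1 : Matrix (Fin 2) (Fin 2) ℝ)
        - (P / 2) • (1 : Matrix (Fin 2) (Fin 2) ℝ)) :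
    ζmin / 4 * (∫ x, frobSq (jac v x)) ≤ ∫ x, frobInner (σ x) (jac v x) := by
  have hv' : ContDiff ℝ ∞ v := hv.of_le (by simp)
  have hu : ∀ i : Fin 2, ContDiff ℝ ∞ (fun y => v y i) := fun i => contDiff_euclidean.mp hv' i
  have hus : ∀ i : Fin 2, HasCompactSupport (fun y => v y i) := fun i =>
    hsupp.comp_left (g := fun z : E2 => z i) rfl
  -- entry functions of the Jacobian
  have hjc : ∀ i j : Fin 2, Continuous fun x => jac v x i j := fun i j =>
    (vp_d1 (hu i) (EuclideanSpace.single j 1)).continuous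
  have hts : ∀ i : Fin 2, tsupport (fun y => v y i) ⊆ tsupport v := fun i =>
    closure_mono (fun y hy => by
      simp only [Function.mem_support] at hy ⊢
      exact fun h => hy (by simp [h]))
  have hj0 : ∀ (i j : Fin 2) (x : E2), x ∉ tsupport v → jac v x i j = 0 := by
    intro i j x hx
    have hx2 : fderiv ℝ (fun y => v y i) x = 0 := by
      by_contra h
      exact hx (hts i (support_fderiv_subset ℝ (Function.mem_support.2 h)))
    show fderiv ℝ (fun y => v y i) x (EuclideanSpace.single j 1) = 0
    rw [hx2]; rfl
  have hint : ∀ F : E2 → ℝ, Continuous F → (∀ x, x ∉ tsupport v → F x = 0) → Integrable F :=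
    fun F hc h0 => hc.integrable_of_hasCompactSupport (HasCompactSupport.intro hsupp h0)
  -- abbreviations
  set Q : E2 → ℝ := fun x =>
    2⁻¹ * (jac v x 0 0 ^ 2 + jac v x 1 1 ^ 2 + (jac v x 0 1 + jac v x 1 0) ^ 2 / 2)
    + 3 / 4 * (jac v x 0 0 + jac v x 1 1) ^ 2 with hQdef
  set T : E2 → ℝ := fun x => jac v x 0 0 + jac v x 1 1 with hTdef
  set S : E2 → ℝ := fun x =>
    jac v x 0 0 ^ 2 + jac v x 0 1 ^ 2 + jac v x 1 0 ^ 2 + jac v x 1 1 ^ 2 with hSdef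
  -- pointwise expansions
  have hfrob : (fun x => frobInner (σ x) (jac v x)) = fun x => ζ x * Q x - P / 2 * T x := by
    funext x
    rw [hσ x, hQdef, hTdef]
    simp only [frobInner, strain, Matrix.trace, Matrix.diag, Matrix.mul_apply, Fin.sum_univ_two,
      Matrix.transpose_apply, Matrix.add_apply, Matrix.sub_apply, Matrix.smul_apply,
      Matrix.one_apply, smul_eq_mul]
    norm_num
    ring
  have hfrobSq : (fun x => frobSq (jac v x)) = S := by
    funext x
    rw [hSdef]
    simp only [frobSq, frobInner, Matrix.trace, Matrix.diag, Matrix.mul_apply, Fin.sum_univ_two,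
      Matrix.transpose_apply]
    ring
  -- continuity and integrability
  have hQc : Continuous Q := by
    rw [hQdef]
    exact (continuous_const.mul ((((hjc 0 0).pow 2).add ((hjc 1 1).pow 2)).add
      ((((hjc 0 1).add (hjc 1 0)).pow 2).div_const 2))).add
      (continuous_const.mul (((hjc 0 0).add (hjc 1 1)).pow 2))
  have hQ0 : ∀ x, x ∉ tsupport v → Q x = 0 := by
    intro x hx; rw [hQdef]; simp [hj0 0 0 x hx, hj0 0 1 x hx, hj0 1 0 x hx, hj0 1 1 x hx]
  have hQnn : ∀ x, 0 ≤ Q x := by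
    intro x; rw [hQdef]; positivity
  have hTc : Continuous T := by rw [hTdef]; exact (hjc 0 0).add (hjc 1 1)
  have hT0 : ∀ x, x ∉ tsupport v → T x = 0 := by
    intro x hx; rw [hTdef]; simp [hj0 0 0 x hx, hj0 1 1 x hx]
  have hSc : Continuous S := by
    rw [hSdef]
    exact ((((hjc 0 0).pow 2).add ((hjc 0 1).pow 2)).add ((hjc 1 0).pow 2)).add ((hjc 1 1).pow 2)
  have hS0 : ∀ x, x ∉ tsupport v → S x = 0 := by
    intro x hx; rw [hSdef]; simp [hj0 0 0 x hx, hj0 0 1 x hx, hj0 1 0 x hx, hj0 1 1 x hx]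
  have intQ : Integrable Q := hint Q hQc hQ0
  have intζQ : Integrable (fun x => ζ x * Q x) :=
    hint _ (hζc.mul hQc) (fun x hx => by rw [hQ0 x hx, mul_zero])
  have intT : Integrable T := hint T hTc hT0
  have intS : Integrable S := hint S hSc hS0
  have int_bc : Integrable (fun x => jac v x 0 1 * jac v x 1 0) :=
    hint _ ((hjc 0 1).mul (hjc 1 0)) (fun x hx => by rw [hj0 0 1 x hx, zero_mul])
  have int_ad : Integrable (fun x => jac v x 0 0 * jac v x 1 1) :=
    hint _ ((hjc 0 0).mul (hjc 1 1)) (fun x hx => by rw [hj0 0 0 x hx, zero_mul])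
  have int_main : Integrable (fun x => 4⁻¹ * S x + T x ^ 2) :=
    hint _ ((continuous_const.mul hSc).add (hTc.pow 2))
      (fun x hx => by rw [hS0 x hx, hT0 x hx]; ring)
  -- the divergence integral vanishes
  have iT : ∫ x, T x = 0 := by
    have h1 : ∫ x, jac v x 0 0 = 0 :=
      vp_integral_dderiv_eq_zero (hu 0) (hus 0) (EuclideanSpace.single 0 1)
    have h2 : ∫ x, jac v x 1 1 = 0 :=
      vp_integral_dderiv_eq_zero (hu 1) (hus 1) (EuclideanSpace.single 1 1)
    have intA : Integrable (fun x => jac v x 0 0) :=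
      vp_dint (hu 0) (hus 0) (EuclideanSpace.single 0 1)
    have intD : Integrable (fun x => jac v x 1 1) :=
      vp_dint (hu 1) (hus 1) (EuclideanSpace.single 1 1)
    rw [hTdef]
    rw [integral_add intA intD, h1, h2, add_zero]
  -- the Korn identity
  have ikorn : ∫ x, jac v x 0 1 * jac v x 1 0 = ∫ x, jac v x 0 0 * jac v x 1 1 :=
    vp_integral_dd_comm (hu 0) (hus 0) (hu 1) (hus 1)
      (EuclideanSpace.single 1 1) (EuclideanSpace.single 0 1)
  -- split Q
  have hQsplit : Q = fun x => (4⁻¹ * S x + T x ^ 2)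
      + 2⁻¹ * (jac v x 0 1 * jac v x 1 0) - 2⁻¹ * (jac v x 0 0 * jac v x 1 1) := by
    funext x; rw [hQdef, hTdef, hSdef]; ring
  have int_bc' : Integrable (fun x => 2⁻¹ * (jac v x 0 1 * jac v x 1 0)) :=
    hint _ (continuous_const.mul ((hjc 0 1).mul (hjc 1 0)))
      (fun x hx => by rw [hj0 0 1 x hx, zero_mul, mul_zero])
  have int_ad' : Integrable (fun x => 2⁻¹ * (jac v x 0 0 * jac v x 1 1)) :=
    hint _ (continuous_const.mul ((hjc 0 0).mul (hjc 1 1)))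
      (fun x hx => by rw [hj0 0 0 x hx, zero_mul, mul_zero])
  have int_sum : Integrable (fun x => 4⁻¹ * S x + T x ^ 2 + 2⁻¹ * (jac v x 0 1 * jac v x 1 0)) :=
    hint _ (((continuous_const.mul hSc).add (hTc.pow 2)).add
        (continuous_const.mul ((hjc 0 1).mul (hjc 1 0))))
      (fun x hx => by rw [hS0 x hx, hT0 x hx, hj0 0 1 x hx]; ring)
  have iQ : ∫ x, Q x = ∫ x, (4⁻¹ * S x + T x ^ 2) := by
    rw [hQsplit]
    rw [integral_sub int_sum int_ad', integral_add int_main int_bc',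
      integral_const_mul, integral_const_mul, ikorn]
    ring
  -- chain of inequalities
  have step1 : 4⁻¹ * ∫ x, S x ≤ ∫ x, Q x := by
    rw [iQ, ← integral_const_mul]
    refine integral_mono (intS.const_mul _) int_main (fun x => ?_)
    have := sq_nonneg (T x)
    simp only
    nlinarith
  have step2 : ζmin * ∫ x, Q x ≤ ∫ x, ζ x * Q x := by
    rw [← integral_const_mul]
    exact integral_mono (intQ.const_mul _) intζQ
      (fun x => mul_le_mul_of_nonneg_right (hζ x) (hQnn x))
  have step3 : ∫ x, frobInner (σ x) (jac v x) = ∫ x, ζ x * Q x := by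
    have intPT : Integrable (fun x => P / 2 * T x) :=
      hint _ (continuous_const.mul hTc) (fun x hx => by rw [hT0 x hx, mul_zero])
    rw [hfrob, integral_sub intζQ intPT, integral_const_mul, iT, mul_zero, sub_zero]
  rw [step3, hfrobSq]
  calc ζmin / 4 * ∫ x, S x = ζmin * (4⁻¹ * ∫ x, S x) := by ring
    _ ≤ ζmin * ∫ x, Q x := by
        exact mul_le_mul_of_nonneg_left step1 (le_of_lt hζmin)
    _ ≤ ∫ x, ζ x * Q x := step2
end
end
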